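/- Let F be a steerable image family of radius n and angular bandlimit V, and consider the measurement model with translations t₁,…,t_p ∈ {n,…,N−n−1}². Then E[A¹_M] = γ·S₁, where A¹_M := (1/N²)·Σ_{j∈ℤ²} M[j], S₁ := (1/(4n²))·(1/2π)∫₀^{2π} Σ_{ℓ∈ℤ²} F_φ[ℓ] dφ, and γ := 4pn²/N². -/

import Mathlib

open Real MeasureTheory ProbabilityTheory intervalIntegral

noncomputable section

/-- A steerable image family of radius `n` and angular bandlimit `V`. -/
def Steerable (n V : ℕ) (F : ℝ → ℤ × ℤ → ℝ) (g : ℤ → ℤ × ℤ → ℂ) : Prop :=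
  (∀ ν : ℤ, ∀ ℓ : ℤ × ℤ, (n : ℤ) < max |ℓ.1| |ℓ.2| → g ν ℓ = 0) ∧
  (∀ φ : ℝ, ∀ ℓ : ℤ × ℤ,
    (F φ ℓ : ℂ) =
      ∑ ν ∈ Finset.Icc (-(V : ℤ)) (V : ℤ), g ν ℓ * Complex.exp (Complex.I * (ν : ℂ) * (φ : ℂ)))

/-- Membership in the grid `{0,…,N−1}²`. -/
def InGrid (N : ℕ) (ℓ : ℤ × ℤ) : Prop :=
  0 ≤ ℓ.1 ∧ ℓ.1 ≤ (N : ℤ) - 1 ∧ 0 ≤ ℓ.2 ∧ ℓ.2 ≤ (N : ℤ) - 1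

instance (N : ℕ) (ℓ : ℤ × ℤ) : Decidable (InGrid N ℓ) := by
  unfold InGrid; infer_instance

/-! Each rotated patch `F_{φ_i}(· − t_i)` lies entirely inside the grid, so the total mass of
the measurement is `∑ᵢ S(φᵢ)` plus the noise summed over the grid, where `S(φ) = ∑_ℓ F_φ[ℓ]`.
Taking expectations is linear: each `S(φᵢ)` has mean `(1/2π)∫₀^{2π} S`, and the noise has
mean zero. -/

open Finset

lemma Finset.sum_comp_sub_eq_tsum {G M : Type*} [AddCommGroup G] [AddCommMonoid M]
    [TopologicalSpace M] {f : G → M} (s : Finset G) (t : G) (hf : ∀ ℓ, f ℓ ≠ 0 → ℓ + t ∈ s) :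
    ∑ j ∈ s, f (j - t) = ∑' ℓ, f ℓ := by
  rw [← (Equiv.subRight t).tsum_eq, tsum_eq_sum]
  · rfl
  · intro j hj
    by_contra h
    exact hj (by simpa using hf _ h)

lemma ProbabilityTheory.HasLaw.integrable_comp {Ω 𝓧 E : Type*} [MeasurableSpace Ω]
    [MeasurableSpace 𝓧] [NormedAddCommGroup E] {P : Measure Ω} {μ : Measure 𝓧} {X : Ω → 𝓧}
    (hX : HasLaw X μ P) {f : 𝓧 → E} (hf : Integrable f μ) : Integrable (f ∘ X) P :=
  (hX.map_eq ▸ hf).comp_aemeasurable hX.aemeasurable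

def uniformIco (a b : ℝ) : Measure ℝ :=
  (ENNReal.ofReal (b - a))⁻¹ • volume.restrict (Set.Ico a b)

lemma integrable_uniformIco {a b : ℝ} (hab : a < b) {G : ℝ → ℝ} (hG : Continuous G) :
    Integrable G (uniformIco a b) :=
  (hG.integrableOn_Icc.mono_set Set.Ico_subset_Icc_self).smul_measure
    (ENNReal.inv_ne_top.mpr (by simpa using hab))

lemma integral_uniformIco {a b : ℝ} (hab : a ≤ b) (G : ℝ → ℝ) :
    ∫ x, G x ∂(uniformIco a b) = (b - a)⁻¹ * ∫ x in a..b, G x := by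
  rw [uniformIco, MeasureTheory.integral_smul_measure, ENNReal.toReal_inv,
    ENNReal.toReal_ofReal (sub_nonneg.2 hab), integral_of_le hab, integral_Ico_eq_integral_Ioo,
    ← integral_Ioc_eq_integral_Ioo, smul_eq_mul]

def gridFinset (N : ℕ) : Finset (ℤ × ℤ) := Icc 0 ((N : ℤ) - 1) ×ˢ Icc 0 ((N : ℤ) - 1)

def centeredBox (n : ℕ) : Finset (ℤ × ℤ) := Icc (-(n : ℤ)) n ×ˢ Icc (-(n : ℤ)) n

lemma mem_gridFinset {N : ℕ} {ℓ : ℤ × ℤ} : ℓ ∈ gridFinset N ↔ InGrid N ℓ := by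
  simp [gridFinset, InGrid, and_assoc]

namespace Steerable

variable {n V : ℕ} {F : ℝ → ℤ × ℤ → ℝ} {g : ℤ → ℤ × ℤ → ℂ}

lemma apply_eq_zero_of_notMem_centeredBox (hF : Steerable n V F g) (φ : ℝ) {ℓ : ℤ × ℤ}
    (hℓ : ℓ ∉ centeredBox n) : F φ ℓ = 0 := by
  have hfar : (n : ℤ) < max |ℓ.1| |ℓ.2| := by
    simp only [centeredBox, mem_product, mem_Icc, ← abs_le] at hℓ
    by_contra! h
    exact hℓ ⟨(le_max_left _ _).trans h, (le_max_right _ _).trans h⟩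
  exact_mod_cast (hF.2 φ ℓ).trans (sum_eq_zero fun ν _ => by rw [hF.1 ν ℓ hfar, zero_mul])

lemma continuous_apply (hF : Steerable n V F g) (ℓ : ℤ × ℤ) : Continuous (F · ℓ) := by
  have hre : (F · ℓ) = fun φ : ℝ => (∑ ν ∈ Icc (-(V : ℤ)) V,
      g ν ℓ * Complex.exp (Complex.I * (ν : ℂ) * (φ : ℂ))).re :=
    funext fun φ => by rw [← hF.2 φ ℓ, Complex.ofReal_re]
  rw [hre]
  fun_prop

lemma tsum_eq_sum_centeredBox (hF : Steerable n V F g) (φ : ℝ) :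
    ∑' ℓ, F φ ℓ = ∑ ℓ ∈ centeredBox n, F φ ℓ :=
  tsum_eq_sum fun _ hℓ => hF.apply_eq_zero_of_notMem_centeredBox φ hℓ

lemma continuous_tsum (hF : Steerable n V F g) : Continuous fun φ => ∑' ℓ, F φ ℓ := by
  simp_rw [hF.tsum_eq_sum_centeredBox]
  exact continuous_finsetSum _ fun ℓ _ => hF.continuous_apply ℓ

lemma sum_gridFinset_translate (hF : Steerable n V F g) {N : ℕ} {t : ℤ × ℤ}
    (ht : (n : ℤ) ≤ t.1 ∧ t.1 ≤ (N : ℤ) - n - 1 ∧ (n : ℤ) ≤ t.2 ∧ t.2 ≤ (N : ℤ) - n - 1)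
    (φ : ℝ) : ∑ j ∈ gridFinset N, F φ (j - t) = ∑' ℓ, F φ ℓ := by
  refine sum_comp_sub_eq_tsum _ _ fun ℓ hℓ => ?_
  have hbox := not_imp_comm.1 (hF.apply_eq_zero_of_notMem_centeredBox φ) hℓ
  simp only [centeredBox, gridFinset, mem_product, mem_Icc, Prod.fst_add, Prod.snd_add] at hbox ⊢
  omega

lemma tsum_superposition (hF : Steerable n V F g) {N p : ℕ} {t : Fin p → ℤ × ℤ}
    (ht : ∀ i, (n : ℤ) ≤ (t i).1 ∧ (t i).1 ≤ (N : ℤ) - n - 1 ∧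
      (n : ℤ) ≤ (t i).2 ∧ (t i).2 ≤ (N : ℤ) - n - 1)
    (φ : Fin p → ℝ) (e m : ℤ × ℤ → ℝ)
    (hm : ∀ ℓ, m ℓ = if InGrid N ℓ then (∑ i, F (φ i) (ℓ - t i)) + e ℓ else 0) :
    ∑' ℓ, m ℓ = ∑ i, ∑' ℓ, F (φ i) ℓ + ∑ ℓ ∈ gridFinset N, e ℓ := by
  have hm_grid : ∀ ℓ ∈ gridFinset N, m ℓ = (∑ i, F (φ i) (ℓ - t i)) + e ℓ :=
    fun ℓ hℓ => by rw [hm, if_pos (mem_gridFinset.1 hℓ)]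
  rw [tsum_eq_sum fun ℓ hℓ => by rw [hm, if_neg (mt mem_gridFinset.2 hℓ)],
    sum_congr rfl hm_grid, sum_add_distrib, sum_comm]
  simp_rw [hF.sum_gridFinset_translate (ht _)]

end Steerable

theorem stmt_13_general {Ω : Type} [MeasureSpace Ω] [IsProbabilityMeasure (ℙ : Measure Ω)]
    (n V N p : ℕ) (hn : 1 ≤ n)
    (σ : ℝ)
    (F : ℝ → ℤ × ℤ → ℝ) (g : ℤ → ℤ × ℤ → ℂ) (hF : Steerable n V F g)
    (t : Fin p → ℤ × ℤ)
    (ht : ∀ i : Fin p,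
      (n : ℤ) ≤ (t i).1 ∧ (t i).1 ≤ (N : ℤ) - n - 1 ∧
      (n : ℤ) ≤ (t i).2 ∧ (t i).2 ≤ (N : ℤ) - n - 1)
    (θ : Fin p → Ω → ℝ) (ε : ℤ × ℤ → Ω → ℝ)
    (hθmeas : ∀ i : Fin p, Measurable (θ i))
    (hεmeas : ∀ ℓ : ℤ × ℤ, Measurable (ε ℓ))
    (hθdist : ∀ i : Fin p,
      Measure.map (θ i) ℙ =
        (ENNReal.ofReal (2 * π))⁻¹ • (volume.restrict (Set.Ico (0 : ℝ) (2 * π))))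
    (hεdist : ∀ ℓ : ℤ × ℤ, InGrid N ℓ →
      Measure.map (ε ℓ) ℙ = gaussianReal 0 (σ ^ 2).toNNReal)
    (M : Ω → ℤ × ℤ → ℝ)
    (hM : ∀ ω : Ω, ∀ ℓ : ℤ × ℤ,
      M ω ℓ = if InGrid N ℓ then (∑ i : Fin p, F (θ i ω) (ℓ - t i)) + ε ℓ ω else 0) :
    ∫ ω, (1 / (N : ℝ) ^ 2 * ∑' j : ℤ × ℤ, M ω j) ∂ℙ =
      (4 * (p : ℝ) * (n : ℝ) ^ 2 / (N : ℝ) ^ 2) *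
        (1 / (4 * (n : ℝ) ^ 2) *
          (1 / (2 * π) * ∫ φ in (0:ℝ)..(2 * π), ∑' ℓ : ℤ × ℤ, F φ ℓ)) := by
  set S : ℝ → ℝ := fun φ => ∑' ℓ, F φ ℓ
  have hθ (i : Fin p) : HasLaw (θ i) (uniformIco 0 (2 * π)) ℙ :=
    ⟨(hθmeas i).aemeasurable, by rw [uniformIco, sub_zero]; exact hθdist i⟩
  have hε {j : ℤ × ℤ} (hj : j ∈ gridFinset N) : HasLaw (ε j) (gaussianReal 0 _) ℙ :=
    ⟨(hεmeas j).aemeasurable, hεdist j (mem_gridFinset.1 hj)⟩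
  have hS_int (i : Fin p) : Integrable (fun ω => S (θ i ω)) ℙ :=
    (hθ i).integrable_comp (integrable_uniformIco (by positivity) hF.continuous_tsum)
  have hS_mean (i : Fin p) : ∫ ω, S (θ i ω) ∂ℙ = (2 * π)⁻¹ * ∫ φ in (0:ℝ)..(2 * π), S φ := by
    simpa using ((hθ i).integral_comp hF.continuous_tsum.aestronglyMeasurable).trans
      (integral_uniformIco two_pi_pos.le S)
  have hε_int {j : ℤ × ℤ} (hj : j ∈ gridFinset N) : Integrable (ε j) ℙ :=
    (hε hj).integrable_comp
      (memLp_one_iff_integrable.1 (memLp_id_gaussianReal' 1 ENNReal.one_ne_top))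
  have hε_mean {j : ℤ × ℤ} (hj : j ∈ gridFinset N) : ∫ ω, ε j ω ∂ℙ = 0 :=
    (hε hj).integral_eq.trans integral_id_gaussianReal
  simp_rw [hF.tsum_superposition ht _ _ _ (hM _)]
  rw [MeasureTheory.integral_const_mul, integral_add (integrable_finsetSum _ fun i _ => hS_int i)
      (integrable_finsetSum _ fun j hj => hε_int hj), integral_finsetSum _ fun i _ => hS_int i,
    integral_finsetSum _ fun j hj => hε_int hj, sum_congr rfl fun i _ => hS_mean i,
    sum_congr rfl fun j hj => hε_mean hj]
  have hn0 : (n : ℝ) ≠ 0 := by positivity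
  simp only [sum_const, card_univ, Fintype.card_fin, nsmul_eq_mul, mul_zero, add_zero]
  field_simp

/-- in the multi-target detection measurement model (uniform random rotations,
i.i.d. Gaussian noise on the grid), the expected first-order autocorrelation of the
measurement satisfies `E[A¹_M] = γ·S₁` with `γ = 4pn²/N²`. -/
theorem stmt_13 {Ω : Type} [MeasureSpace Ω] [IsProbabilityMeasure (ℙ : Measure Ω)]
    (n V N p : ℕ) (hn : 1 ≤ n) (hV : 1 ≤ V) (hN : 1 ≤ N) (hp : 1 ≤ p)
    (σ : ℝ) (hσ : 0 ≤ σ)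
    (F : ℝ → ℤ × ℤ → ℝ) (g : ℤ → ℤ × ℤ → ℂ) (hF : Steerable n V F g)
    (t : Fin p → ℤ × ℤ)
    (ht : ∀ i : Fin p,
      (n : ℤ) ≤ (t i).1 ∧ (t i).1 ≤ (N : ℤ) - n - 1 ∧
      (n : ℤ) ≤ (t i).2 ∧ (t i).2 ≤ (N : ℤ) - n - 1)
    (θ : Fin p → Ω → ℝ) (ε : ℤ × ℤ → Ω → ℝ)
    (hθmeas : ∀ i : Fin p, Measurable (θ i))
    (hεmeas : ∀ ℓ : ℤ × ℤ, Measurable (ε ℓ))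
    (hθdist : ∀ i : Fin p,
      Measure.map (θ i) ℙ =
        (ENNReal.ofReal (2 * π))⁻¹ • (volume.restrict (Set.Ico (0 : ℝ) (2 * π))))
    (hεdist : ∀ ℓ : ℤ × ℤ, InGrid N ℓ →
      Measure.map (ε ℓ) ℙ = gaussianReal 0 (σ ^ 2).toNNReal)
    (hεzero : ∀ ℓ : ℤ × ℤ, ¬InGrid N ℓ → ε ℓ = 0)
    (hindep : iIndepFun (m := fun _ : Fin p ⊕ (ℤ × ℤ) => (inferInstance : MeasurableSpace ℝ))
      (Sum.elim θ ε) ℙ)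
    (M : Ω → ℤ × ℤ → ℝ)
    (hM : ∀ ω : Ω, ∀ ℓ : ℤ × ℤ,
      M ω ℓ = if InGrid N ℓ then (∑ i : Fin p, F (θ i ω) (ℓ - t i)) + ε ℓ ω else 0) :
    ∫ ω, (1 / (N : ℝ) ^ 2 * ∑' j : ℤ × ℤ, M ω j) ∂ℙ =
      (4 * (p : ℝ) * (n : ℝ) ^ 2 / (N : ℝ) ^ 2) *
        (1 / (4 * (n : ℝ) ^ 2) *
          (1 / (2 * π) * ∫ φ in (0:ℝ)..(2 * π), ∑' ℓ : ℤ × ℤ, F φ ℓ)) :=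
  stmt_13_general n V N p hn σ F g hF t ht θ ε hθmeas hεmeas hθdist hεdist M hM
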